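/- arXiv:math/0402280 — 5 statements merged into one kernel-verified Lean document; each statement's English description precedes it below -/
import Mathlib

section
/- Let K be a cone field on a topological real vector bundle (E,p,M) over a paracompact topological manifold M without boundary. Then there exists a continuous section ζ of E such that ζ(x) lies in the interior of K(x) in the fiber E_x for every x ∈ M (equivalently, the cone K⁰_Γ of positive continuous sections is solid, i.e. has nonempty interior in the graph topology). -/
open Bundle Topology Set

/-- A *cone field* on a topological real vector bundle `(E, p, M)`:
to each `x ∈ M` it assigns a subset `K x` of the fiber `E x` such that
(K1) each `K x` is a convex cone, closed in the fiber, pointed and solid, and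
(K2) the union of the fiberwise interiors and the union of the fiberwise
complements are open in the total space. -/
structure IsConeField (F : Type*) [NormedAddCommGroup F] [NormedSpace ℝ F]
    {M : Type*} [TopologicalSpace M]
    (E : M → Type*) [∀ x, AddCommGroup (E x)] [∀ x, Module ℝ (E x)]
    [∀ x, TopologicalSpace (E x)] [TopologicalSpace (Bundle.TotalSpace F E)]
    [FiberBundle F E] [VectorBundle ℝ F E]
    (K : ∀ x, Set (E x)) : Prop where
  add_mem : ∀ x, ∀ v ∈ K x, ∀ w ∈ K x, v + w ∈ K x
  smul_mem : ∀ x, ∀ c : ℝ, 0 ≤ c → ∀ v ∈ K x, c • v ∈ K x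
  isClosed : ∀ x, IsClosed (K x)
  pointed : ∀ x, K x ∩ -(K x) = {0}
  solid : ∀ x, (interior (K x)).Nonempty
  isOpen_int : IsOpen {p : Bundle.TotalSpace F E | p.2 ∈ interior (K p.proj)}
  isOpen_compl : IsOpen {p : Bundle.TotalSpace F E | p.2 ∉ K p.proj}

variable (F : Type*) [NormedAddCommGroup F] [NormedSpace ℝ F]
  {M : Type*} [TopologicalSpace M]
  (E : M → Type*) [∀ x, AddCommGroup (E x)] [∀ x, Module ℝ (E x)]
  [∀ x, TopologicalSpace (E x)] [TopologicalSpace (Bundle.TotalSpace F E)]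
  [FiberBundle F E] [VectorBundle ℝ F E]

/-- A (set-theoretic) section `σ` of the bundle is a *continuous section*
if `x ↦ (x, σ x)` is continuous into the total space. -/
def IsContSection (σ : ∀ x, E x) : Prop :=
  Continuous (fun x => (⟨x, σ x⟩ : Bundle.TotalSpace F E))

variable {F E} in
/-- `σ` is a *positive section* for the cone field `K` if `σ x ∈ K x` for all `x`. -/
def IsPosSection (K : ∀ x, Set (E x)) (σ : ∀ x, E x) : Prop :=
  ∀ x, σ x ∈ K x

variable {F E} in
/-- The order relation on sections induced by the cone of positive sections:
`σ₁ ≤ σ₂` iff `σ₂ - σ₁` is a positive section. -/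
def ConeLE (K : ∀ x, Set (E x)) (σ₁ σ₂ : ∀ x, E x) : Prop :=
  ∀ x, σ₂ x - σ₁ x ∈ K x

variable {F E} in
/-- `σ` is *`ζ`-measurable*: there is `λ ≥ 0` with `-λ ζ ≤ σ ≤ λ ζ` in the cone order. -/
def IsZetaMeas (K : ∀ x, Set (E x)) (ζ σ : ∀ x, E x) : Prop :=
  ∃ lam : ℝ, 0 ≤ lam ∧ ConeLE K (fun x => (-lam) • ζ x) σ ∧ ConeLE K σ (fun x => lam • ζ x)

variable {F E} in
/-- The norm `|σ|⁰_ζ = min {λ ≥ 0 | -λζ ≤ σ ≤ λζ}` (as an infimum; the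
minimum is attained, see the corresponding statement). -/
noncomputable def zetaNorm (K : ∀ x, Set (E x)) (ζ σ : ∀ x, E x) : ℝ :=
  sInf {lam : ℝ | 0 ≤ lam ∧ ConeLE K (fun x => (-lam) • ζ x) σ ∧ ConeLE K σ (fun x => lam • ζ x)}

/-- The graph (Whitney `C⁰`) topology `WO⁰`, generated by the sets
`W(U) = {σ | ∀ x, (x, σ x) ∈ U}` for `U` open in the total space. -/
def WO0 : TopologicalSpace (∀ x, E x) :=
  TopologicalSpace.generateFrom
    {S | ∃ U : Set (Bundle.TotalSpace F E), IsOpen U ∧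
      S = {σ : ∀ x, E x | ∀ x, (⟨x, σ x⟩ : Bundle.TotalSpace F E) ∈ U}}

/-- The space `Γ⁰(E)` of continuous sections of the bundle. -/
def ContSection : Type _ := {σ : ∀ x, E x // IsContSection F E σ}

/-! An interior point of `K x₀`, carried along a local trivialization, gives a local section
which stays in the fiberwise interiors near `x₀`, because their union is open in the total space.
The interiors are convex, so a partition of unity glues these local sections into a global one. -/

open scoped Manifold

theorem Convex.interior_of_continuousLinearEquiv {V W : Type*} [AddCommGroup V] [Module ℝ V]
    [TopologicalSpace V] [AddCommGroup W] [Module ℝ W] [TopologicalSpace W]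
    [IsTopologicalAddGroup W] [ContinuousConstSMul ℝ W] (L : V ≃L[ℝ] W) {S : Set V}
    (hS : Convex ℝ S) : Convex ℝ (interior S) := by
  have hpre : interior S = L ⁻¹' interior (L '' S) := by
    have := L.toHomeomorph.preimage_interior (L '' S)
    simp only [ContinuousLinearEquiv.coe_toHomeomorph] at this
    rw [this, preimage_image_eq _ L.injective]
  rw [hpre]
  exact (hS.linear_image (L : V →ₗ[ℝ] W)).interior.linear_preimage (L : V →ₗ[ℝ] W)

theorem FiberBundle.exists_continuousOn_section_mem_of_isOpen {B G : Type*} [TopologicalSpace B]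
    [TopologicalSpace G] {V : B → Type*} [∀ b, Zero (V b)] [∀ b, TopologicalSpace (V b)]
    [TopologicalSpace (TotalSpace G V)] [FiberBundle G V] {O : Set (TotalSpace G V)}
    (hO : IsOpen O) {b₀ : B} {v : V b₀} (hv : (⟨b₀, v⟩ : TotalSpace G V) ∈ O) :
    ∃ U ∈ 𝓝 b₀, ∃ s : ∀ b, V b,
      ContinuousOn (fun b => (⟨b, s b⟩ : TotalSpace G V)) U ∧ ∀ b ∈ U, ⟨b, s b⟩ ∈ O := by
  let e := trivializationAt G V b₀
  have he : b₀ ∈ e.baseSet := mem_baseSet_trivializationAt G V b₀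
  let s : ∀ b, V b := fun b => e.symm b (e ⟨b₀, v⟩).2
  have hs : ContinuousOn (fun b => (⟨b, s b⟩ : TotalSpace G V)) e.baseSet :=
    e.continuousOn_symm.comp (continuous_id.prodMk continuous_const).continuousOn
      fun _ hb => ⟨hb, mem_univ _⟩
  refine ⟨e.baseSet ∩ (fun b => (⟨b, s b⟩ : TotalSpace G V)) ⁻¹' O,
    (hs.isOpen_inter_preimage e.open_baseSet hO).mem_nhds ⟨he, ?_⟩, s,
    hs.mono inter_subset_left, fun b hb => hb.2⟩
  simpa only [mem_preimage, s, e.symm_apply_apply_mk he] using hv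

section Bundle

variable {F E}

/- A topological analogue of `exists_contMDiffSection_forall_mem_convex_of_local`: continuity is
`C⁰`-smoothness for the chart structure of `M`, so the lemmas on sums of `C^n` sections apply. -/
theorem exists_isContSection_forall_mem_convex_of_local {EM : Type*} [NormedAddCommGroup EM]
    [NormedSpace ℝ EM] [ChartedSpace EM M] [T2Space M] [ParacompactSpace M]
    (t : ∀ x, Set (E x)) (ht : ∀ x, Convex ℝ (t x))
    (hloc : ∀ x₀ : M, ∃ U ∈ 𝓝 x₀, ∃ s : ∀ x, E x,
      ContinuousOn (fun x => (⟨x, s x⟩ : TotalSpace F E)) U ∧ ∀ x ∈ U, s x ∈ t x) :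
    ∃ s : ∀ x, E x, IsContSection F E s ∧ ∀ x, s x ∈ t x := by
  choose W hW s hs hst using hloc
  obtain ⟨ρ, hρ⟩ := PartitionOfUnity.exists_isSubordinate isClosed_univ (fun x => interior (W x))
    (fun _ => isOpen_interior) fun x _ => mem_iUnion.2 ⟨x, mem_interior_iff_mem_nhds.2 (hW x)⟩
  have hterm (i : M) : CMDiff 0 (T% (fun x => ρ i x • s i x)) :=
    ContMDiffOn.smul_section_of_tsupport (contMDiffOn_zero_iff.2 (ρ i).continuous.continuousOn)
      isOpen_interior (hρ i) (contMDiffOn_zero_iff.2 ((hs i).mono interior_subset))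
  refine ⟨fun x => ∑ᶠ i, ρ i x • s i x, ?_, fun x => ?_⟩
  · refine contMDiff_zero_iff.1 (ContMDiff.finsum_section_of_locallyFinite ?_ hterm)
    exact ρ.locallyFinite.subset fun i x hx => left_ne_zero_of_smul hx
  · refine (ht x).finsum_mem (ρ.nonneg · x) (ρ.sum_eq_one (mem_univ x)) fun i hi => ?_
    exact hst i x (interior_subset (hρ i (subset_tsupport _ hi)))

theorem IsConeField.convex {K : ∀ x, Set (E x)} (hK : IsConeField F E K) (x : M) :
    Convex ℝ (K x) :=
  fun _ ha _ hb _ _ hα hβ _ => hK.add_mem x _ (hK.smul_mem x _ hα _ ha) _ (hK.smul_mem x _ hβ _ hb)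

theorem IsConeField.convex_interior {K : ∀ x, Set (E x)} (hK : IsConeField F E K) (x : M) :
    Convex ℝ (interior (K x)) :=
  (hK.convex x).interior_of_continuousLinearEquiv
    ((trivializationAt F E x).continuousLinearEquivAt ℝ x (mem_baseSet_trivializationAt F E x))

end Bundle

/-- For a cone field `K` on a topological real vector bundle over a
paracompact topological manifold `M` without boundary, there exists a continuous
section `ζ` with `ζ x ∈ Int (K x)` for every `x` (so the cone of positive continuous
sections is solid). -/
theorem exists_contSection_mem_interior_coneField
    {n : ℕ} [ChartedSpace (EuclideanSpace ℝ (Fin n)) M] [T2Space M] [ParacompactSpace M]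
    (K : ∀ x, Set (E x)) (hK : IsConeField F E K) :
    ∃ ζ : ∀ x, E x, IsContSection F E ζ ∧ ∀ x, ζ x ∈ interior (K x) := by
  refine exists_isContSection_forall_mem_convex_of_local (EM := EuclideanSpace ℝ (Fin n)) _
    hK.convex_interior fun x₀ => ?_
  exact FiberBundle.exists_continuousOn_section_mem_of_isOpen hK.isOpen_int (hK.solid x₀).some_mem
end

section
/- Let K be a cone field on a topological real vector bundle (E,p,M) over a paracompact topological manifold M without boundary. Then the cone K⁰_Γ of positive continuous sections is generating in the space Γ⁰(E) of continuous sections: for every continuous section σ of E there exist positive continuous sections ζ₁, ζ₂ ∈ K⁰_Γ such that σ = ζ₁ − ζ₂. -/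
open Bundle Topology Set

variable (F : Type*) [NormedAddCommGroup F] [NormedSpace ℝ F]
  {M : Type*} [TopologicalSpace M]
  (E : M → Type*) [∀ x, AddCommGroup (E x)] [∀ x, Module ℝ (E x)]
  [∀ x, TopologicalSpace (E x)] [TopologicalSpace (Bundle.TotalSpace F E)]
  [FiberBundle F E] [VectorBundle ℝ F E]

variable {F E} in
/-- If `g : M → F` is continuous at `x ∈ e.baseSet`, then the section
`y ↦ e.symm y (g y)` of the bundle is continuous at `x`. -/
lemma contAt_symm_section (e : Trivialization F (Bundle.TotalSpace.proj (F := F) (E := E)))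
    {g : M → F} {x : M} (hx : x ∈ e.baseSet) (hg : ContinuousAt g x) :
    ContinuousAt (fun y => (⟨y, e.symm y (g y)⟩ : Bundle.TotalSpace F E)) x := by
  have h1 : ContinuousAt (fun z : M × F => (⟨z.1, e.symm z.1 z.2⟩ : Bundle.TotalSpace F E))
      (x, g x) :=
    e.continuousOn_symm.continuousAt
      (prod_mem_nhds (e.open_baseSet.mem_nhds hx) Filter.univ_mem)
  exact ContinuousAt.comp (f := fun y => (y, g y)) h1 (continuousAt_id.prodMk hg)

variable {F E} in
/-- Reading a section which is continuous at `x ∈ e.baseSet` through the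
trivialization `e` gives a map into `F` continuous at `x`. -/
lemma contAt_read (e : Trivialization F (Bundle.TotalSpace.proj (F := F) (E := E)))
    [e.IsLinear ℝ] {s : ∀ x, E x} {x : M} (hx : x ∈ e.baseSet)
    (hs : ContinuousAt (fun y => (⟨y, s y⟩ : Bundle.TotalSpace F E)) x) :
    ContinuousAt (fun y => e.continuousLinearMapAt ℝ y (s y)) x := by
  have hsrc : (⟨x, s x⟩ : Bundle.TotalSpace F E) ∈ e.source := e.mem_source.mpr hx
  have hA : ContinuousAt (fun y => e (⟨y, s y⟩ : Bundle.TotalSpace F E)) x :=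
    ContinuousAt.comp (f := fun y => (⟨y, s y⟩ : Bundle.TotalSpace F E))
      (e.continuousOn.continuousAt (e.open_source.mem_nhds hsrc)) hs
  have h2 : ContinuousAt (fun y => (e (⟨y, s y⟩ : Bundle.TotalSpace F E)).2) x := hA.snd
  refine h2.congr ?_
  filter_upwards [e.open_baseSet.eventually_mem hx] with y hy
  rw [e.continuousLinearMapAt_apply ℝ, e.coe_linearMapAt_of_mem hy]

/-- The cone `K⁰_Γ` of positive continuous sections is generating in
`Γ⁰(E)`: every continuous section is a difference of two positive continuous sections. -/
theorem coneField_positive_sections_generating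
    {n : ℕ} [ChartedSpace (EuclideanSpace ℝ (Fin n)) M] [T2Space M] [ParacompactSpace M]
    (K : ∀ x, Set (E x)) (hK : IsConeField F E K)
    (σ : ∀ x, E x) (hσ : IsContSection F E σ) :
    ∃ ζ₁ ζ₂ : ∀ x, E x,
      IsContSection F E ζ₁ ∧ IsContSection F E ζ₂ ∧
      IsPosSection K ζ₁ ∧ IsPosSection K ζ₂ ∧
      σ = fun x => ζ₁ x - ζ₂ x := by
  classical
  have hσ' : Continuous (fun x => (⟨x, σ x⟩ : Bundle.TotalSpace F E)) := hσ
  have hK0 : ∀ x, (0 : E x) ∈ K x := by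
    intro x
    obtain ⟨v, hv⟩ := hK.solid x
    simpa using hK.smul_mem x 0 le_rfl v (interior_subset hv)
  -- scaling by a positive real preserves fiberwise interiors
  have smul_int : ∀ (y : M) (t : ℝ), 0 < t → ∀ w : E y,
      w ∈ interior (K y) → t • w ∈ interior (K y) := by
    intro y t ht w hw
    set ψ := (trivializationAt F E y).continuousLinearEquivAt ℝ y
      (FiberBundle.mem_baseSet_trivializationAt F E y) with hψ
    have hcont : Continuous (fun z : E y => t⁻¹ • z) := by
      have heq : (fun z : E y => t⁻¹ • z) = fun z => ψ.symm (t⁻¹ • ψ z) := by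
        funext z; rw [map_smul, ψ.symm_apply_apply]
      rw [heq]
      exact ψ.symm.continuous.comp ((continuous_const_smul _).comp ψ.continuous)
    have hmem : t • w ∈ (fun z : E y => t⁻¹ • z) ⁻¹' interior (K y) := by
      have : t⁻¹ • t • w = w := by rw [smul_smul, inv_mul_cancel₀ ht.ne', one_smul]
      simpa [this] using hw
    refine interior_maximal ?_ (hcont.isOpen_preimage _ isOpen_interior) hmem
    intro z hz
    have h1 := hK.smul_mem y t ht.le _ (interior_subset hz)
    have : t • t⁻¹ • z = z := by rw [smul_smul, mul_inv_cancel₀ ht.ne', one_smul]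
    rwa [this] at h1
  -- local construction of sections `τ` with `τ ∈ K` and `σ + τ ∈ K` near any point
  have loc : ∀ x : M, ∃ (U : Set M) (τ : ∀ y, E y), IsOpen U ∧ x ∈ U ∧
      (∀ y ∈ U, τ y ∈ K y ∧ σ y + τ y ∈ K y) ∧
      (∀ y ∈ U, ContinuousAt (fun z => (⟨z, τ z⟩ : Bundle.TotalSpace F E)) y) := by
    intro x
    set e := trivializationAt F E x with he
    have hx : x ∈ e.baseSet := FiberBundle.mem_baseSet_trivializationAt F E x
    obtain ⟨v, hv⟩ := hK.solid x
    set φ := e.continuousLinearEquivAt ℝ x hx with hφ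
    -- find `s₀ > 0` with `v + s₀ • σ x ∈ interior (K x)`
    have hc : ContinuousAt (fun s : ℝ => v + s • σ x) 0 := by
      have heq : (fun s : ℝ => v + s • σ x) = fun s => φ.symm (φ v + s • φ (σ x)) := by
        funext s; rw [map_add, map_smul, φ.symm_apply_apply, φ.symm_apply_apply]
      rw [heq]
      exact (φ.symm.continuous.comp
        (continuous_const.add (continuous_id.smul continuous_const))).continuousAt
    have h0 : v + (0 : ℝ) • σ x ∈ interior (K x) := by simpa using hv
    have hev : ∀ᶠ s : ℝ in 𝓝 0, v + s • σ x ∈ interior (K x) :=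
      hc.eventually_mem (isOpen_interior.mem_nhds h0)
    obtain ⟨s₀, hs₀mem, hs₀pos⟩ :=
      ((hev.filter_mono (nhdsWithin_le_nhds (s := Set.Ioi (0 : ℝ)))).and
        self_mem_nhdsWithin).exists
    replace hs₀pos : (0:ℝ) < s₀ := hs₀pos
    set t := s₀⁻¹ with htdef
    have ht : 0 < t := inv_pos.mpr hs₀pos
    set w : F := (e (⟨x, v⟩ : Bundle.TotalSpace F E)).2 with hw
    set τ : ∀ y, E y := fun y => e.symm y (t • w) with hτ
    have hτx : τ x = t • v := by
      show e.symm x (t • w) = t • v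
      rw [← e.symmL_apply (R := ℝ) hx, map_smul, e.symmL_apply (R := ℝ) hx, hw, e.symm_apply_apply_mk hx]
    -- section continuity of `τ` and `σ + τ` on the base set
    have hτcont : ∀ y ∈ e.baseSet,
        ContinuousAt (fun z => (⟨z, τ z⟩ : Bundle.TotalSpace F E)) y := fun y hy =>
      contAt_symm_section e hy continuousAt_const
    have hsumcont : ∀ y ∈ e.baseSet,
        ContinuousAt (fun z => (⟨z, σ z + τ z⟩ : Bundle.TotalSpace F E)) y := by
      intro y hy
      have h2 : ContinuousAt (fun z =>
          (⟨z, e.symm z (e.continuousLinearMapAt ℝ z (σ z) + t • w)⟩ :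
            Bundle.TotalSpace F E)) y :=
        contAt_symm_section e hy
          ((contAt_read e hy hσ'.continuousAt).add continuousAt_const)
      refine h2.congr ?_
      filter_upwards [e.open_baseSet.eventually_mem hy] with z hz
      have hrep : e.symm z (e.continuousLinearMapAt ℝ z (σ z) + t • w) = σ z + τ z := by
        rw [← e.symmL_apply (R := ℝ) hz, map_add, e.symmL_continuousLinearMapAt hz, e.symmL_apply (R := ℝ) hz]
      rw [hrep]
    -- the open neighborhood
    set U : Set M :=
      {y | y ∈ e.baseSet ∧ τ y ∈ interior (K y) ∧ σ y + τ y ∈ interior (K y)} with hU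
    have hUopen : IsOpen U := by
      rw [isOpen_iff_mem_nhds]
      rintro y ⟨hyB, hy1, hy2⟩
      have c1 : ∀ᶠ z in 𝓝 y,
          (⟨z, τ z⟩ : Bundle.TotalSpace F E) ∈
            {p : Bundle.TotalSpace F E | p.2 ∈ interior (K p.proj)} :=
        (hτcont y hyB).eventually_mem (hK.isOpen_int.mem_nhds hy1)
      have c2 : ∀ᶠ z in 𝓝 y,
          (⟨z, σ z + τ z⟩ : Bundle.TotalSpace F E) ∈
            {p : Bundle.TotalSpace F E | p.2 ∈ interior (K p.proj)} :=
        (hsumcont y hyB).eventually_mem (hK.isOpen_int.mem_nhds hy2)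
      filter_upwards [c1, c2, e.open_baseSet.eventually_mem hyB] with z hz1 hz2 hz3
      exact ⟨hz3, hz1, hz2⟩
    have hxU : x ∈ U := by
      refine ⟨hx, ?_, ?_⟩
      · rw [hτx]; exact smul_int x t ht v hv
      · rw [hτx]
        have heq : σ x + t • v = t • (v + s₀ • σ x) := by
          rw [smul_add, smul_smul, htdef, inv_mul_cancel₀ hs₀pos.ne', one_smul, add_comm]
        rw [heq]
        exact smul_int x t ht _ hs₀mem
    exact ⟨U, τ, hUopen, hxU,
      fun y hy => ⟨interior_subset hy.2.1, interior_subset hy.2.2⟩,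
      fun y hy => hτcont y hy.1⟩
  choose U τ hUo hxU hUK hUc using loc
  -- a partition of unity subordinate to the cover `U`
  obtain ⟨f, hf⟩ := PartitionOfUnity.exists_isSubordinate (s := (univ : Set M))
    isClosed_univ U hUo (fun y _ => mem_iUnion.mpr ⟨y, hxU y⟩)
  -- the glued sections
  set ζ₂ : ∀ y, E y := fun y => ∑ᶠ i, f i y • τ i y with hζ₂
  have sum_mem : ∀ (y : M) (s : Finset M) (g : M → E y),
      (∀ i ∈ s, g i ∈ K y) → (∑ i ∈ s, g i) ∈ K y := by
    intro y s g
    induction s using Finset.induction_on with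
    | empty => intro _; simpa using hK0 y
    | insert _ _ h ih =>
      intro hg
      rw [Finset.sum_insert h]
      exact hK.add_mem y _ (hg _ (Finset.mem_insert_self _ _)) _
        (ih fun i hi => hg i (Finset.mem_insert_of_mem hi))
  have hTfin : ∀ y : M, {i | y ∈ Function.support (f i)}.Finite := fun y =>
    f.locallyFinite.point_finite y
  have hsupp1 : ∀ y : M, (Function.support fun i => f i y) ⊆ (hTfin y).toFinset := by
    intro y i hi
    simp only [Finset.mem_coe, Set.Finite.mem_toFinset]
    exact hi
  have hsupp2 : ∀ y : M, (Function.support fun i => f i y • τ i y) ⊆ (hTfin y).toFinset := by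
    intro y i hi
    refine hsupp1 y ?_
    intro h0
    apply hi
    simp [h0]
  have hmemU : ∀ (i y : M), f i y ≠ 0 → y ∈ U i := fun i y h =>
    hf i (subset_tsupport _ h)
  have hζ₂eq : ∀ y, ζ₂ y = ∑ i ∈ (hTfin y).toFinset, f i y • τ i y := fun y =>
    finsum_eq_sum_of_support_subset _ (hsupp2 y)
  have hζ₂pos : IsPosSection K ζ₂ := by
    intro y
    rw [hζ₂eq]
    refine sum_mem y _ _ fun i hi => ?_
    rw [Set.Finite.mem_toFinset] at hi
    exact hK.smul_mem y _ (f.nonneg i y) _ (hUK i y (hmemU i y hi)).1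
  set ζ₁ : ∀ y, E y := fun y => σ y + ζ₂ y with hζ₁
  have hone : ∀ y, (∑ i ∈ (hTfin y).toFinset, f i y) = 1 := by
    intro y
    rw [← finsum_eq_sum_of_support_subset _ (hsupp1 y)]
    exact f.sum_eq_one (mem_univ y)
  have hζ₁pos : IsPosSection K ζ₁ := by
    intro y
    have hσsum : (∑ i ∈ (hTfin y).toFinset, f i y • σ y) = σ y := by
      rw [← Finset.sum_smul, hone, one_smul]
    have h1 : (∑ i ∈ (hTfin y).toFinset, f i y • (σ y + τ i y)) = ζ₁ y := by
      calc (∑ i ∈ (hTfin y).toFinset, f i y • (σ y + τ i y))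
          = ∑ i ∈ (hTfin y).toFinset, (f i y • σ y + f i y • τ i y) :=
            Finset.sum_congr rfl fun i _ => smul_add _ _ _
        _ = (∑ i ∈ (hTfin y).toFinset, f i y • σ y) +
              ∑ i ∈ (hTfin y).toFinset, f i y • τ i y := Finset.sum_add_distrib
        _ = σ y + ζ₂ y := by rw [hσsum, ← hζ₂eq]
    rw [← h1]
    refine sum_mem y _ _ fun i hi => ?_
    rw [Set.Finite.mem_toFinset] at hi
    exact hK.smul_mem y _ (f.nonneg i y) _ (hUK i y (hmemU i y hi)).2
  -- continuity of the glued sections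
  have key : ∀ x₀ : M,
      ContinuousAt (fun y => (⟨y, ζ₂ y⟩ : Bundle.TotalSpace F E)) x₀ ∧
      ContinuousAt (fun y => (⟨y, ζ₁ y⟩ : Bundle.TotalSpace F E)) x₀ := by
    intro x₀
    set e := trivializationAt F E x₀ with he
    have hx₀ : x₀ ∈ e.baseSet := FiberBundle.mem_baseSet_trivializationAt F E x₀
    obtain ⟨is, n, hn, hnU, hnsupp⟩ := f.exists_finset_nhds_support_subset hf hUo x₀
    obtain ⟨W, hWsub, hWo, hx₀W⟩ :=
      mem_nhds_iff.mp (Filter.inter_mem hn (e.open_baseSet.mem_nhds hx₀))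
    have hx₀n : x₀ ∈ n := mem_of_mem_nhds hn
    set g : M → F := fun y => ∑ i ∈ is, f i y • e.continuousLinearMapAt ℝ y (τ i y) with hg
    have hx₀U : ∀ i ∈ is, x₀ ∈ U i := fun i hi => Set.mem_iInter₂.mp (hnU hx₀n) i hi
    have hgc : ContinuousAt g x₀ := by
      refine tendsto_finset_sum _ fun i hi => ?_
      exact ((f i).continuous.continuousAt).smul
        (contAt_read e hx₀ (hUc i x₀ (hx₀U i hi)))
    have hrep : ∀ y ∈ W, ζ₂ y = e.symm y (g y) := by
      intro y hy
      have hyB : y ∈ e.baseSet := (hWsub hy).2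
      have hysupp : (Function.support fun i => f i y • τ i y) ⊆ ↑is := by
        intro i hi
        refine hnsupp y (hWsub hy).1 ?_
        intro h0
        apply hi
        simp [Function.mem_support, not_not] at h0
        simp [h0]
      have h1 : ζ₂ y = ∑ i ∈ is, f i y • τ i y :=
        finsum_eq_sum_of_support_subset _ hysupp
      rw [h1, ← e.symmL_apply (R := ℝ) hyB, map_sum]
      exact Finset.sum_congr rfl fun i _ => by
        rw [map_smul, e.symmL_continuousLinearMapAt hyB]
    constructor
    · have hmain : ContinuousAt
          (fun y => (⟨y, e.symm y (g y)⟩ : Bundle.TotalSpace F E)) x₀ :=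
        contAt_symm_section e hx₀ hgc
      refine hmain.congr ?_
      filter_upwards [hWo.eventually_mem hx₀W] with y hy
      rw [hrep y hy]
    · have hmain : ContinuousAt
          (fun y => (⟨y, e.symm y (e.continuousLinearMapAt ℝ y (σ y) + g y)⟩ :
            Bundle.TotalSpace F E)) x₀ :=
        contAt_symm_section e hx₀ ((contAt_read e hx₀ hσ'.continuousAt).add hgc)
      refine hmain.congr ?_
      filter_upwards [hWo.eventually_mem hx₀W] with y hy
      have hyB : y ∈ e.baseSet := (hWsub hy).2
      have : e.symm y (e.continuousLinearMapAt ℝ y (σ y) + g y) = ζ₁ y := by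
        rw [← e.symmL_apply (R := ℝ) hyB, map_add, e.symmL_continuousLinearMapAt hyB,
          e.symmL_apply (R := ℝ) hyB, ← hrep y hy]
      rw [this]
  refine ⟨ζ₁, ζ₂, ?_, ?_, hζ₁pos, hζ₂pos, ?_⟩
  · exact continuous_iff_continuousAt.mpr fun x₀ => (key x₀).2
  · exact continuous_iff_continuousAt.mpr fun x₀ => (key x₀).1
  · funext y
    show σ y = (σ y + ζ₂ y) - ζ₂ y
    rw [add_sub_cancel_right]
end

section
/- Let K be a cone field on a topological real vector bundle (E,p,M) over a paracompact topological manifold M without boundary, and let ζ be a continuous section of E with ζ(x) ∈ Int(K(x)) for every x ∈ M. Then for each ζ-measurable section σ the minimum |σ|⁰_ζ := min{λ ∈ ℝ₊ : −λζ ≤ σ ≤ λζ} is attained, and the map σ ↦ |σ|⁰_ζ is a norm on the real vector space Γ⁰_ζ of ζ-measurable continuous sections. -/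
open Bundle Topology Set

variable (F : Type*) [NormedAddCommGroup F] [NormedSpace ℝ F]
  {M : Type*} [TopologicalSpace M]
  (E : M → Type*) [∀ x, AddCommGroup (E x)] [∀ x, Module ℝ (E x)]
  [∀ x, TopologicalSpace (E x)] [TopologicalSpace (Bundle.TotalSpace F E)]
  [FiberBundle F E] [VectorBundle ℝ F E]

/-! The admissible scales `{λ ≥ 0 | -λζ ≤ σ ≤ λζ}` form an intersection of preimages of the
closed fibers `K x` under continuous affine maps `λ ↦ λ • ζ x ± σ x`, hence a closed set of
reals, so for a `ζ`-measurable `σ` the infimum `|σ|⁰_ζ` is itself admissible. The norm axioms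
then follow from the cone axioms applied to these minimal scales. -/

section AdmissibleScales

variable {F E} {K : ∀ x, Set (E x)}
omit [TopologicalSpace M] [∀ x, TopologicalSpace (E x)]

/-- `zetaNorm K ζ σ` is by definition the infimum of this set. -/
def admissibleScales (K : ∀ x, Set (E x)) (ζ σ : ∀ x, E x) : Set ℝ :=
  {lam : ℝ | 0 ≤ lam ∧ ConeLE K (fun x => (-lam) • ζ x) σ ∧ ConeLE K σ (fun x => lam • ζ x)}

theorem mem_admissibleScales_iff {ζ σ : ∀ x, E x} {lam : ℝ} :
    lam ∈ admissibleScales K ζ σ ↔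
      0 ≤ lam ∧ ∀ x, lam • ζ x + σ x ∈ K x ∧ lam • ζ x + -σ x ∈ K x := by
  simp only [admissibleScales, ConeLE, Set.mem_ofPred_eq, neg_smul, sub_neg_eq_add,
    ← sub_eq_add_neg, forall_and, add_comm (σ _)]

theorem zetaNorm_nonneg (K : ∀ x, Set (E x)) (ζ σ : ∀ x, E x) : 0 ≤ zetaNorm K ζ σ :=
  Real.sInf_nonneg fun _ h => h.1

theorem zetaNorm_le_of_mem {ζ σ : ∀ x, E x} {lam : ℝ} (h : lam ∈ admissibleScales K ζ σ) :
    zetaNorm K ζ σ ≤ lam :=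
  csInf_le ⟨0, fun _ h => h.1⟩ h

end AdmissibleScales

namespace IsConeField

variable {F E} {K : ∀ x, Set (E x)}

theorem zero_mem (hK : IsConeField F E K) (x : M) : (0 : E x) ∈ K x :=
  ((Set.ext_iff.1 (hK.pointed x) 0).2 rfl).1

theorem eq_zero_of_mem_of_neg_mem (hK : IsConeField F E K) {x : M} {v : E x}
    (hv : v ∈ K x) (hnv : -v ∈ K x) : v = 0 :=
  (hK.pointed x).subset ⟨hv, hnv⟩

/-- Fiberwise the cone is closed, and the fiber is linearly homeomorphic to `F` through a
trivialization, so affine lines meet it in closed sets. -/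
theorem isClosed_setOf_smul_add_mem (hK : IsConeField F E K) (x : M) (v w : E x) :
    IsClosed {lam : ℝ | lam • v + w ∈ K x} := by
  let L := (trivializationAt F E x).continuousLinearEquivAt ℝ x
    (FiberBundle.mem_baseSet_trivializationAt F E x)
  have hline : (fun lam : ℝ => lam • v + w) = fun lam => L.symm (lam • L v + L w) := by
    funext lam
    rw [← map_smul, ← map_add, ContinuousLinearEquiv.symm_apply_apply]
  refine (hK.isClosed x).preimage ?_
  rw [hline]
  fun_prop

theorem isClosed_admissibleScales (hK : IsConeField F E K) (ζ σ : ∀ x, E x) :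
    IsClosed (admissibleScales K ζ σ) := by
  have hset : admissibleScales K ζ σ = Set.Ici 0 ∩
      ((⋂ x, {lam : ℝ | lam • ζ x + σ x ∈ K x}) ∩ ⋂ x, {lam : ℝ | lam • ζ x + -σ x ∈ K x}) := by
    ext lam
    simp only [mem_admissibleScales_iff, Set.mem_inter_iff, Set.mem_Ici, Set.mem_iInter,
      Set.mem_ofPred_eq, forall_and]
  rw [hset]
  exact isClosed_Ici.inter <| (isClosed_iInter fun x => hK.isClosed_setOf_smul_add_mem x _ _).inter
    (isClosed_iInter fun x => hK.isClosed_setOf_smul_add_mem x _ _)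

theorem isLeast_zetaNorm (hK : IsConeField F E K) {ζ σ : ∀ x, E x}
    (hσ : IsZetaMeas K ζ σ) : IsLeast (admissibleScales K ζ σ) (zetaNorm K ζ σ) :=
  ⟨(hK.isClosed_admissibleScales ζ σ).csInf_mem hσ ⟨0, fun _ h => h.1⟩,
    fun _ h => zetaNorm_le_of_mem h⟩

theorem zetaNorm_mem (hK : IsConeField F E K) {ζ σ : ∀ x, E x} (hσ : IsZetaMeas K ζ σ) :
    zetaNorm K ζ σ ∈ admissibleScales K ζ σ :=
  (hK.isLeast_zetaNorm hσ).1

theorem zero_mem_admissibleScales_zero (hK : IsConeField F E K) (ζ : ∀ x, E x) :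
    (0 : ℝ) ∈ admissibleScales K ζ (fun _ => 0) :=
  mem_admissibleScales_iff.2 ⟨le_rfl, fun x => by simpa using hK.zero_mem x⟩

theorem abs_mul_mem_admissibleScales_smul (hK : IsConeField F E K) {ζ σ : ∀ x, E x}
    {lam : ℝ} (h : lam ∈ admissibleScales K ζ σ) (c : ℝ) :
    |c| * lam ∈ admissibleScales K ζ (fun x => c • σ x) := by
  obtain ⟨hlam, hmem⟩ := mem_admissibleScales_iff.1 h
  refine mem_admissibleScales_iff.2 ⟨mul_nonneg (abs_nonneg c) hlam, fun x => ?_⟩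
  obtain ⟨hplus, hminus⟩ := hmem x
  rcases le_or_gt 0 c with hc | hc
  · rw [abs_of_nonneg hc, mul_smul, ← smul_neg, ← smul_add, ← smul_add]
    exact ⟨hK.smul_mem x c hc _ hplus, hK.smul_mem x c hc _ hminus⟩
  · have hc' : 0 ≤ -c := by linarith
    rw [abs_of_neg hc]
    constructor
    · convert hK.smul_mem x (-c) hc' _ hminus using 1; module
    · convert hK.smul_mem x (-c) hc' _ hplus using 1; module

theorem add_mem_admissibleScales_add (hK : IsConeField F E K) {ζ σ τ : ∀ x, E x} {a b : ℝ}
    (ha : a ∈ admissibleScales K ζ σ) (hb : b ∈ admissibleScales K ζ τ) :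
    a + b ∈ admissibleScales K ζ (fun x => σ x + τ x) := by
  obtain ⟨ha0, haK⟩ := mem_admissibleScales_iff.1 ha
  obtain ⟨hb0, hbK⟩ := mem_admissibleScales_iff.1 hb
  refine mem_admissibleScales_iff.2 ⟨add_nonneg ha0 hb0, fun x => ⟨?_, ?_⟩⟩
  · convert hK.add_mem x _ (haK x).1 _ (hbK x).1 using 1; module
  · convert hK.add_mem x _ (haK x).2 _ (hbK x).2 using 1; module

theorem zetaNorm_zero (hK : IsConeField F E K) (ζ : ∀ x, E x) :
    zetaNorm K ζ (fun _ => 0) = 0 :=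
  (zetaNorm_le_of_mem (hK.zero_mem_admissibleScales_zero ζ)).antisymm (zetaNorm_nonneg K ζ _)

theorem eq_zero_of_zetaNorm_eq_zero (hK : IsConeField F E K) {ζ σ : ∀ x, E x}
    (hσ : IsZetaMeas K ζ σ) (h : zetaNorm K ζ σ = 0) : σ = fun _ => 0 := by
  have h0 := hK.zetaNorm_mem hσ
  rw [h, mem_admissibleScales_iff] at h0
  funext x
  exact hK.eq_zero_of_mem_of_neg_mem (by simpa using (h0.2 x).1) (by simpa using (h0.2 x).2)

theorem zetaNorm_smul_le (hK : IsConeField F E K) {ζ σ : ∀ x, E x} (hσ : IsZetaMeas K ζ σ)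
    (c : ℝ) : zetaNorm K ζ (fun x => c • σ x) ≤ |c| * zetaNorm K ζ σ :=
  zetaNorm_le_of_mem (hK.abs_mul_mem_admissibleScales_smul (hK.zetaNorm_mem hσ) c)

/-- The reverse inequality is `zetaNorm_smul_le` applied to `c • σ` and `c⁻¹`. -/
theorem zetaNorm_smul (hK : IsConeField F E K) {ζ σ : ∀ x, E x} (hσ : IsZetaMeas K ζ σ)
    (c : ℝ) : zetaNorm K ζ (fun x => c • σ x) = |c| * zetaNorm K ζ σ := by
  refine (hK.zetaNorm_smul_le hσ c).antisymm ?_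
  rcases eq_or_ne c 0 with rfl | hc
  · simpa using zetaNorm_nonneg K ζ _
  have hcσ : IsZetaMeas K ζ (fun x => c • σ x) :=
    ⟨_, hK.abs_mul_mem_admissibleScales_smul (hK.zetaNorm_mem hσ) c⟩
  have hle := hK.zetaNorm_smul_le hcσ c⁻¹
  simp only [smul_smul, inv_mul_cancel₀ hc, one_smul, abs_inv] at hle
  rwa [le_inv_mul_iff₀ (abs_pos.2 hc)] at hle

theorem zetaNorm_add_le (hK : IsConeField F E K) {ζ σ τ : ∀ x, E x} (hσ : IsZetaMeas K ζ σ)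
    (hτ : IsZetaMeas K ζ τ) :
    zetaNorm K ζ (fun x => σ x + τ x) ≤ zetaNorm K ζ σ + zetaNorm K ζ τ :=
  zetaNorm_le_of_mem (hK.add_mem_admissibleScales_add (hK.zetaNorm_mem hσ) (hK.zetaNorm_mem hτ))

end IsConeField

theorem coneField_zetaNorm_isLeast_and_norm
    (K : ∀ x, Set (E x)) (hK : IsConeField F E K)
    (ζ : ∀ x, E x) :
    -- the minimum is attained
    (∀ σ : ∀ x, E x, IsContSection F E σ → IsZetaMeas K ζ σ →
      IsLeast {lam : ℝ | 0 ≤ lam ∧ ConeLE K (fun x => (-lam) • ζ x) σ ∧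
        ConeLE K σ (fun x => lam • ζ x)} (zetaNorm K ζ σ)) ∧
    -- the norm of the zero section is zero
    zetaNorm K ζ (fun _ => 0) = 0 ∧
    -- definiteness
    (∀ σ : ∀ x, E x, IsContSection F E σ → IsZetaMeas K ζ σ →
      zetaNorm K ζ σ = 0 → σ = fun _ => 0) ∧
    -- absolute homogeneity
    (∀ σ : ∀ x, E x, ∀ c : ℝ, IsContSection F E σ → IsZetaMeas K ζ σ →
      zetaNorm K ζ (fun x => c • σ x) = |c| * zetaNorm K ζ σ) ∧
    -- triangle inequality
    (∀ σ τ : ∀ x, E x, IsContSection F E σ → IsContSection F E τ →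
      IsZetaMeas K ζ σ → IsZetaMeas K ζ τ →
      zetaNorm K ζ (fun x => σ x + τ x) ≤ zetaNorm K ζ σ + zetaNorm K ζ τ) :=
  ⟨fun _ _ hσ => hK.isLeast_zetaNorm hσ, hK.zetaNorm_zero ζ,
    fun _ _ hσ => hK.eq_zero_of_zetaNorm_eq_zero hσ,
    fun _ c _ hσ => hK.zetaNorm_smul hσ c,
    fun _ _ _ _ hσ hτ => hK.zetaNorm_add_le hσ hτ⟩
end

section
/- Let K be a cone field on a topological real vector bundle (E,p,M) over a paracompact topological manifold M without boundary. Then every continuous section σ of E with compact support is ζ-measurable for every continuous section ζ with ζ(x) ∈ Int(K(x)) for all x ∈ M; that is, Γ⁰_c(E) ⊆ Γ⁰_ζ for all such ζ. -/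
open Bundle Topology Set

variable (F : Type*) [NormedAddCommGroup F] [NormedSpace ℝ F]
  {M : Type*} [TopologicalSpace M]
  (E : M → Type*) [∀ x, AddCommGroup (E x)] [∀ x, Module ℝ (E x)]
  [∀ x, TopologicalSpace (E x)] [TopologicalSpace (Bundle.TotalSpace F E)]
  [FiberBundle F E] [VectorBundle ℝ F E]

variable {F E} in
/-- Continuity of `(x, t) ↦ ⟨x, ζ x + t • σ x⟩` into the total space. -/
lemma contAux (σ ζ : ∀ x, E x) (hσ : IsContSection F E σ) (hζ : IsContSection F E ζ) :
    Continuous (fun p : M × ℝ => (⟨p.1, ζ p.1 + p.2 • σ p.1⟩ : Bundle.TotalSpace F E)) := by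
  rw [continuous_iff_continuousAt]
  rintro ⟨x₀, t₀⟩
  rw [FiberBundle.continuousAt_totalSpace]
  refine ⟨continuousAt_fst, ?_⟩
  set e := trivializationAt F E x₀ with he
  have hx₀ : x₀ ∈ e.baseSet := FiberBundle.mem_baseSet_trivializationAt F E x₀
  have hmem : ∀ τ : ∀ x, E x, (⟨x₀, τ x₀⟩ : Bundle.TotalSpace F E) ∈ e.source := by
    intro τ; rw [e.mem_source]; exact hx₀
  have h1 : ContinuousAt (fun x => (e ⟨x, ζ x⟩).2) x₀ :=
    continuousAt_snd.comp (ContinuousAt.comp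
      (f := fun x => (⟨x, ζ x⟩ : Bundle.TotalSpace F E))
      (e.continuousOn.continuousAt (e.open_source.mem_nhds (hmem ζ))) hζ.continuousAt)
  have h2 : ContinuousAt (fun x => (e ⟨x, σ x⟩).2) x₀ :=
    continuousAt_snd.comp (ContinuousAt.comp
      (f := fun x => (⟨x, σ x⟩ : Bundle.TotalSpace F E))
      (e.continuousOn.continuousAt (e.open_source.mem_nhds (hmem σ))) hσ.continuousAt)
  have hcont : ContinuousAt
      (fun p : M × ℝ => (e ⟨p.1, ζ p.1⟩).2 + p.2 • (e ⟨p.1, σ p.1⟩).2) (x₀, t₀) :=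
    by have := (h1.comp (continuousAt_fst (p := (x₀, t₀)))).add
         ((continuousAt_snd (p := (x₀, t₀))).smul (h2.comp (continuousAt_fst (p := (x₀, t₀)))))
       exact this
  refine hcont.congr ?_
  have hnhds : {p : M × ℝ | p.1 ∈ e.baseSet} ∈ nhds (x₀, t₀) :=
    (e.open_baseSet.preimage continuous_fst).mem_nhds hx₀
  refine Filter.eventuallyEq_of_mem hnhds ?_
  rintro ⟨x, t⟩ hx
  simp only [Set.mem_setOf_eq] at hx
  have key : ∀ v : E x, (e ⟨x, v⟩).2 = e.linearMapAt ℝ x v := by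
    intro v; rw [e.coe_linearMapAt_of_mem hx]
  simp only [key, map_add, map_smul]

/-- Every continuous section with compact support is `ζ`-measurable
for every continuous section `ζ` with `ζ x ∈ Int (K x)` for all `x`:
`Γ⁰_c(E) ⊆ Γ⁰_ζ`. -/
theorem coneField_compactSupport_zetaMeas
    {n : ℕ} [ChartedSpace (EuclideanSpace ℝ (Fin n)) M] [T2Space M] [ParacompactSpace M]
    (K : ∀ x, Set (E x)) (hK : IsConeField F E K)
    (σ : ∀ x, E x) (hσ : IsContSection F E σ)
    (hsupp : ∃ C : Set M, IsCompact C ∧ ∀ x ∉ C, σ x = 0)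
    (ζ : ∀ x, E x) (hζ : IsContSection F E ζ) (hζK : ∀ x, ζ x ∈ interior (K x)) :
    IsZetaMeas K ζ σ := by
  obtain ⟨C, hCcomp, hC0⟩ := hsupp
  have hKsub : ∀ x, interior (K x) ⊆ K x := fun x => interior_subset
  rcases C.eq_empty_or_nonempty with hCe | hCne
  · refine ⟨1, zero_le_one, fun x => ?_, fun x => ?_⟩ <;>
      (have h0 : σ x = 0 := hC0 x (by simp [hCe]); rw [h0]; simp;
       exact hKsub x (hζK x))
  · -- V is the open preimage of the interior set under (x,t) ↦ ⟨x, ζ x + t • σ x⟩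
    set g : M × ℝ → Bundle.TotalSpace F E :=
      fun p => ⟨p.1, ζ p.1 + p.2 • σ p.1⟩ with hg
    have hgcont : Continuous g := contAux σ ζ hσ hζ
    set V : Set (M × ℝ) := g ⁻¹' {p : Bundle.TotalSpace F E | p.2 ∈ interior (K p.proj)}
      with hV
    have hVopen : IsOpen V := hK.isOpen_int.preimage hgcont
    have hmemV : ∀ x : M, (x, (0 : ℝ)) ∈ V := by
      intro x
      simp only [hV, Set.mem_preimage, hg, Set.mem_setOf_eq, zero_smul, add_zero]
      exact hζK x
    -- for each x, find a neighborhood and ε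
    have key : ∀ x : M, ∃ ε > (0 : ℝ), ∃ W : Set M, IsOpen W ∧ x ∈ W ∧
        ∀ y ∈ W, ∀ t : ℝ, |t| < ε → (y, t) ∈ V := by
      intro x
      have : V ∈ nhds (x, (0 : ℝ)) := hVopen.mem_nhds (hmemV x)
      rw [mem_nhds_prod_iff'] at this
      obtain ⟨W, T, hWopen, hxW, hTopen, h0T, hsub⟩ := this
      obtain ⟨ε, hε, hball⟩ := Metric.isOpen_iff.mp hTopen 0 h0T
      refine ⟨ε, hε, W, hWopen, hxW, fun y hy t ht => hsub ⟨hy, hball ?_⟩⟩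
      simpa [Real.dist_eq] using ht
    choose ε hε W hWopen hxW hball using key
    -- finite subcover of C
    have hcover : C ⊆ ⋃ x ∈ C, W x := fun x hx =>
      Set.mem_biUnion hx (hxW x)
    obtain ⟨s, hs⟩ := hCcomp.elim_finite_subcover_image
      (fun x _ => hWopen x) hcover
    obtain ⟨hsC, hsfin, hscov⟩ := hs
    have hsne : hsfin.toFinset.Nonempty := by
      obtain ⟨x₀, hx₀⟩ := hCne
      obtain ⟨y, hy, hx₀y⟩ := Set.mem_iUnion₂.mp (hscov hx₀)
      exact ⟨y, hsfin.mem_toFinset.mpr hy⟩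
    set ε₀ : ℝ := hsfin.toFinset.inf' hsne ε with hε₀def
    have hε₀pos : 0 < ε₀ := by
      rw [hε₀def, Finset.lt_inf'_iff]
      exact fun i _ => hε i
    set t : ℝ := ε₀ / 2 with htdef
    have htpos : 0 < t := by positivity
    -- for every x ∈ C, both (x, t) and (x, -t) lie in V
    have hmain : ∀ x ∈ C, ∀ s' : ℝ, |s'| ≤ t → (x, s') ∈ V := by
      intro x hx s' hs'
      obtain ⟨y, hy, hxy⟩ := Set.mem_iUnion₂.mp (hscov hx)
      refine hball y x hxy s' (lt_of_le_of_lt hs' ?_)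
      have hle : ε₀ ≤ ε y := Finset.inf'_le ε (hsfin.mem_toFinset.mpr hy)
      calc t = ε₀ / 2 := rfl
        _ < ε₀ := by linarith
        _ ≤ ε y := hle
    refine ⟨t⁻¹, le_of_lt (by positivity), fun x => ?_, fun x => ?_⟩
    · -- σ x - (-t⁻¹) • ζ x = t⁻¹ • (ζ x + t • σ x) ∈ K x
      by_cases hx : x ∈ C
      · have hmem : ζ x + t • σ x ∈ interior (K x) := hmain x hx t (by rw [abs_of_pos htpos])
        have := hK.smul_mem x t⁻¹ (le_of_lt (by positivity)) _ (hKsub x hmem)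
        have heq : t⁻¹ • (ζ x + t • σ x) = σ x - (-t⁻¹) • ζ x := by
          match_scalars <;> field_simp
        rwa [heq] at this
      · have h0 : σ x = 0 := hC0 x hx
        rw [h0]
        have := hK.smul_mem x t⁻¹ (le_of_lt (by positivity)) _ (hKsub x (hζK x))
        have heq : t⁻¹ • ζ x = (0 : E x) - (-t⁻¹) • ζ x := by
          rw [neg_smul]; abel
        rwa [heq] at this
    · -- t⁻¹ • ζ x - σ x = t⁻¹ • (ζ x + (-t) • σ x) ∈ K x
      by_cases hx : x ∈ C
      · have hmem : ζ x + (-t) • σ x ∈ interior (K x) :=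
          hmain x hx (-t) (by rw [abs_neg, abs_of_pos htpos])
        have := hK.smul_mem x t⁻¹ (le_of_lt (by positivity)) _ (hKsub x hmem)
        have heq : t⁻¹ • (ζ x + (-t) • σ x) = t⁻¹ • ζ x - σ x := by
          match_scalars <;> field_simp
        rwa [heq] at this
      · have h0 : σ x = 0 := hC0 x hx
        rw [h0]
        have := hK.smul_mem x t⁻¹ (le_of_lt (by positivity)) _ (hKsub x (hζK x))
        have heq : t⁻¹ • ζ x = t⁻¹ • ζ x - (0 : E x) := by abel
        rwa [heq] at this
end

section
/- Let (M, g) be an n-dimensional Riemannian manifold of finite volume, i.e. the Riemannian volume measure ν_g satisfies Vol(M,g) := ν_g(M) < ∞. Let h, k be continuous symmetric 2-covariant tensor fields on M that are g-measurable, i.e. there exist λ, μ ∈ ℝ₊ with −λ g(x) ≤ h(x) ≤ λ g(x) and −μ g(x) ≤ k(x) ≤ μ g(x) for all x ∈ M (where ≤ is the pointwise positive-semidefinite order), and set |h|⁰_g := min{λ : −λg ≤ h ≤ λg} and |k|⁰_g := min{μ : −μg ≤ k ≤ μg}. Then the function x ↦ Σᵢ h_x((k_x(Eᵢ))^♯,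 Eᵢ) (where (Eᵢ) is any local g-orthonormal frame; this is the pointwise inner product trace(g⁻¹ h g⁻¹ k)) is ν_g-integrable, and the canonical metric pairing G_g(h,k) := ∫_M trace(g⁻¹ h g⁻¹ k) dν_g satisfies −n |h|⁰_g |k|⁰_g Vol(M,g) ≤ G_g(h,k) ≤ n |h|⁰_g |k|⁰_g Vol(M,g). In particular the canonical Riemannian metric G on the space of Riemannian metrics is defined on the space Γ_g of g-measurable tensor fields when g has finite volume. -/
open Bundle Set Manifold MeasureTheory

/-- `|h|⁰_g`: the infimum (in fact minimum) of the set of `λ ≥ 0` with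
`-λ g ≤ h ≤ λ g` in the pointwise positive-semidefinite order, for 2-covariant
symmetric tensor fields `g, h` on the `n`-manifold `M`. -/
noncomputable def gMeasNorm {n : ℕ} {M : Type*} [TopologicalSpace M]
    [ChartedSpace (EuclideanSpace ℝ (Fin n)) M] [IsManifold (𝓡 n) (⊤ : ℕ∞) M]
    (g h : ∀ x : M, TangentSpace (𝓡 n) x →ₗ[ℝ] TangentSpace (𝓡 n) x →ₗ[ℝ] ℝ) : ℝ :=
  sInf {lam : ℝ | 0 ≤ lam ∧ ∀ (x : M) (v : TangentSpace (𝓡 n) x),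
    -(lam * g x v v) ≤ h x v v ∧ h x v v ≤ lam * g x v v}

/-! At a point, `g` is an inner product for which `H = g⁻¹h` is self-adjoint. In a
`g`-orthonormal eigenbasis `(eᵢ)` of `H`, with eigenvalues `|aᵢ| ≤ |h|⁰_g`, one has
`trace (H K) = Σᵢ aᵢ k(eᵢ, eᵢ)`, so `|trace (H K)| ≤ n |h|⁰_g |k|⁰_g`; the infimum defining
`|h|⁰_g` is attained because the admissible set is closed. In a local frame with Gram matrices
`G`, `Mₕ`, `Mₖ` the integrand is `trace (Mₖ G⁻¹ Mₕ G⁻¹)`, hence continuous, so it is a bounded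
measurable function for a finite measure. -/

open scoped InnerProductSpace

namespace LinearMap

theorem IsSymmetric.abs_trace_comp_le {E : Type*} [NormedAddCommGroup E]
    [InnerProductSpace ℝ E] [FiniteDimensional ℝ E] {A B : E →ₗ[ℝ] E} (hA : A.IsSymmetric)
    {lam mu : ℝ} (hAb : ∀ v, |⟪A v, v⟫_ℝ| ≤ lam * ‖v‖ ^ 2)
    (hBb : ∀ v, |⟪B v, v⟫_ℝ| ≤ mu * ‖v‖ ^ 2) :
    |trace ℝ E (A ∘ₗ B)| ≤ Module.finrank ℝ E * lam * mu := by
  set b := hA.eigenvectorBasis rfl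
  have hA_b : ∀ i, A (b i) = hA.eigenvalues rfl i • b i := hA.apply_eigenvectorBasis rfl
  have hterm : ∀ i, |⟪b i, A (B (b i))⟫_ℝ| ≤ lam * mu := fun i => by
    have hev : |hA.eigenvalues rfl i| ≤ lam := by
      simpa [hA_b, real_inner_smul_left, b.norm_eq_one] using hAb (b i)
    rw [← hA, hA_b, real_inner_smul_left, real_inner_comm, abs_mul]
    exact mul_le_mul hev (by simpa [b.norm_eq_one] using hBb (b i)) (abs_nonneg _)
      ((abs_nonneg _).trans hev)
  calc |trace ℝ E (A ∘ₗ B)| = |∑ i, ⟪b i, A (B (b i))⟫_ℝ| := by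
        rw [trace_eq_sum_inner _ b]; rfl
    _ ≤ ∑ i, |⟪b i, A (B (b i))⟫_ℝ| := Finset.abs_sum_le_sum_abs _ _
    _ ≤ ∑ _i, lam * mu := Finset.sum_le_sum fun i _ => hterm i
    _ = Module.finrank ℝ E * lam * mu := by simp [mul_assoc]

section PosDef

variable {V : Type*} [AddCommGroup V] [Module ℝ V] {g : V →ₗ[ℝ] V →ₗ[ℝ] ℝ}

@[reducible]
def innerProductCoreOfPosDef (hg_symm : ∀ u v, g u v = g v u)
    (hg_pos : ∀ v, v ≠ 0 → 0 < g v v) : InnerProductSpace.Core ℝ V where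
  inner u v := g u v
  conj_inner_symm u v := hg_symm v u
  re_inner_nonneg v := by
    rcases eq_or_ne v 0 with rfl | hv
    · simp
    · exact (hg_pos v hv).le
  add_left u v w := by simp
  smul_left u v r := by simp
  definite v hv := by
    by_contra hne
    exact (hg_pos v hne).ne' hv

theorem abs_trace_comp_le_of_posDef [FiniteDimensional ℝ V] {h k : V →ₗ[ℝ] V →ₗ[ℝ] ℝ}
    (hg_symm : ∀ u v, g u v = g v u) (hg_pos : ∀ v, v ≠ 0 → 0 < g v v)
    (hh_symm : ∀ u v, h u v = h v u) {lam mu : ℝ}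
    (hhb : ∀ v, -(lam * g v v) ≤ h v v ∧ h v v ≤ lam * g v v)
    (hkb : ∀ v, -(mu * g v v) ≤ k v v ∧ k v v ≤ mu * g v v)
    {H K : V →ₗ[ℝ] V} (hH : ∀ u v, g (H u) v = h u v) (hK : ∀ u v, g (K u) v = k u v) :
    |trace ℝ V (H ∘ₗ K)| ≤ Module.finrank ℝ V * lam * mu := by
  let cd := innerProductCoreOfPosDef hg_symm hg_pos
  let := cd.toNormedAddCommGroup
  let := InnerProductSpace.ofCore cd.toCore
  have hnorm : ∀ v : V, ‖v‖ ^ 2 = g v v := fun v => (real_inner_self_eq_norm_sq v).symm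
  have hH_symm : H.IsSymmetric := fun u v => by
    change g (H u) v = g u (H v)
    rw [hH, hg_symm, hH, hh_symm]
  refine hH_symm.abs_trace_comp_le (B := K) (fun v => ?_) (fun v => ?_)
  · change |g (H v) v| ≤ lam * ‖v‖ ^ 2
    rw [hnorm, hH, abs_le]
    exact hhb v
  · change |g (K v) v| ≤ mu * ‖v‖ ^ 2
    rw [hnorm, hK, abs_le]
    exact hkb v

end PosDef

section Matrix

open scoped Matrix

variable {R V ι : Type*} [CommRing R] [AddCommGroup V] [Module R V] [Fintype ι] [DecidableEq ι]

theorem trace_comp_eq_trace_toMatrix₂ (b : Module.Basis ι R V) {g h k : V →ₗ[R] V →ₗ[R] R}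
    (hg : IsUnit (toMatrix₂ b b g).det) {H K : V →ₗ[R] V}
    (hH : ∀ u v, g (H u) v = h u v) (hK : ∀ u v, g (K u) v = k u v) :
    trace R V (H ∘ₗ K) = (toMatrix₂ b b k * (toMatrix₂ b b g)⁻¹ *
      toMatrix₂ b b h * (toMatrix₂ b b g)⁻¹).trace := by
  have hmat : ∀ {T : V →ₗ[R] V} {t : V →ₗ[R] V →ₗ[R] R}, (∀ u v, g (T u) v = t u v) →
      toMatrix b b T = (toMatrix₂ b b t * (toMatrix₂ b b g)⁻¹)ᵀ := fun {T t} hT => by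
    obtain rfl : g.comp T = t := ext₂ hT
    rw [toMatrix₂_comp b, Matrix.mul_nonsing_inv_cancel_right _ _ hg, Matrix.transpose_transpose]
  rw [trace_eq_matrix_trace R b, toMatrix_comp b b b, hmat hH, hmat hK, ← Matrix.transpose_mul,
    Matrix.trace_transpose]
  simp only [Matrix.mul_assoc]

end Matrix

theorem det_toMatrix₂_ne_zero_of_pos {K V ι : Type*} [Field K] [Preorder K] [AddCommGroup V]
    [Module K V] [Fintype ι] [DecidableEq ι] (b : Module.Basis ι K V) {g : V →ₗ[K] V →ₗ[K] K}
    (hg_pos : ∀ v, v ≠ 0 → 0 < g v v) : (toMatrix₂ b b g).det ≠ 0 :=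
  (separatingLeft_iff_det_ne_zero b).mp fun v hv => by
    by_contra hne
    exact (hg_pos v hne).ne' (hv v)

end LinearMap

section Bundle

open LinearMap

variable {B F : Type*} {E : B → Type*} [TopologicalSpace B] [NormedAddCommGroup F]
  [NormedSpace ℝ F] [TopologicalSpace (TotalSpace F E)] [∀ x, AddCommGroup (E x)]
  [∀ x, Module ℝ (E x)]

theorem Bundle.Trivialization.continuousOn_bilin_symm (e : Trivialization F (π F E))
    [e.IsLinear ℝ] {t : ∀ x, E x →ₗ[ℝ] E x →ₗ[ℝ] ℝ}
    (ht : Continuous fun p : TotalSpace F E => t p.proj p.2 p.2)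
    (ht_symm : ∀ x u v, t x u v = t x v u) (v w : F) :
    ContinuousOn (fun x => t x (e.symm x v) (e.symm x w)) e.baseSet := by
  have hdiag : ∀ u : F, ContinuousOn (fun x => t x (e.symm x u) (e.symm x u)) e.baseSet :=
    fun u => ht.comp_continuousOn <| e.continuousOn_symm.comp
      (continuous_id.prodMk continuous_const).continuousOn fun x hx => ⟨hx, mem_univ u⟩
  refine ((((hdiag (v + w)).sub (hdiag v)).sub (hdiag w)).div_const 2).congr fun x hx => ?_
  simp only [Pi.sub_apply, ← e.linearEquivAt_symm_apply (R := ℝ) x hx, map_add,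
    LinearMap.add_apply]
  rw [ht_symm x ((e.linearEquivAt ℝ x hx).symm w)]
  ring

variable [∀ x, TopologicalSpace (E x)] [FiberBundle F E] [VectorBundle ℝ F E]
  [FiniteDimensional ℝ F]

theorem continuous_trace_comp {g h k : ∀ x, E x →ₗ[ℝ] E x →ₗ[ℝ] ℝ}
    (hg_symm : ∀ x u v, g x u v = g x v u) (hg_pos : ∀ x v, v ≠ 0 → 0 < g x v v)
    (hg_cont : Continuous fun p : TotalSpace F E => g p.proj p.2 p.2)
    (hh_symm : ∀ x u v, h x u v = h x v u) (hk_symm : ∀ x u v, k x u v = k x v u)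
    (hh_cont : Continuous fun p : TotalSpace F E => h p.proj p.2 p.2)
    (hk_cont : Continuous fun p : TotalSpace F E => k p.proj p.2 p.2)
    {H K : ∀ x, E x →ₗ[ℝ] E x} (hH : ∀ x u v, g x (H x u) v = h x u v)
    (hK : ∀ x u v, g x (K x u) v = k x u v) :
    Continuous fun x => trace ℝ (E x) (H x ∘ₗ K x) := by
  refine continuous_iff_continuousAt.2 fun x₀ => ?_
  set e := trivializationAt F E x₀
  have hx₀ : x₀ ∈ e.baseSet := mem_baseSet_trivializationAt F E x₀
  let bF := Module.finBasis ℝ F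
  let frame : ∀ x ∈ e.baseSet, Module.Basis _ ℝ (E x) :=
    fun x hx => bF.map (e.linearEquivAt ℝ x hx).symm
  let gram (t : ∀ x, E x →ₗ[ℝ] E x →ₗ[ℝ] ℝ) (x : B) : Matrix _ _ ℝ :=
    Matrix.of fun i j => t x (e.symm x (bF i)) (e.symm x (bF j))
  have hgram_eq : ∀ t x (hx : x ∈ e.baseSet),
      gram t x = toMatrix₂ (frame x hx) (frame x hx) (t x) :=
    fun t x hx => by ext i j; simp [gram, frame, toMatrix₂_apply]
  have hgram_cont : ∀ t : ∀ x, E x →ₗ[ℝ] E x →ₗ[ℝ] ℝ,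
      (Continuous fun p : TotalSpace F E => t p.proj p.2 p.2) → (∀ x u v, t x u v = t x v u) →
      ContinuousAt (gram t) x₀ := fun t ht ht_symm =>
    continuousAt_pi.2 fun i => continuousAt_pi.2 fun j =>
      (e.continuousOn_bilin_symm ht ht_symm _ _).continuousAt (e.open_baseSet.mem_nhds hx₀)
  have hdet : ∀ x (hx : x ∈ e.baseSet), (gram g x).det ≠ 0 := fun x hx => by
    rw [hgram_eq g x hx]
    exact det_toMatrix₂_ne_zero_of_pos _ (hg_pos x)
  have htrace : ∀ x ∈ e.baseSet, trace ℝ (E x) (H x ∘ₗ K x) =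
      (gram k x * (gram g x)⁻¹ * gram h x * (gram g x)⁻¹).trace := fun x hx => by
    have hunit := (isUnit_iff_ne_zero.2 (hdet x hx))
    rw [hgram_eq g x hx] at hunit
    rw [hgram_eq g x hx, hgram_eq h x hx, hgram_eq k x hx]
    exact trace_comp_eq_trace_toMatrix₂ _ hunit (hH x) (hK x)
  have hinv : ContinuousAt (fun x => (gram g x)⁻¹) x₀ := by
    refine (continuousAt_matrix_inv _ ?_).comp (hgram_cont g hg_cont hg_symm)
    rw [Ring.inverse_eq_inv']
    exact continuousAt_inv₀ (hdet x₀ hx₀)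
  refine ContinuousAt.congr ?_
    (Filter.eventuallyEq_of_mem (e.open_baseSet.mem_nhds hx₀) htrace).symm
  exact continuous_id.matrix_trace.continuousAt.comp
    ((((hgram_cont k hk_cont hk_symm).mul hinv).mul (hgram_cont h hh_cont hh_symm)).mul hinv)

end Bundle

theorem gMeasNorm_spec {n : ℕ} {M : Type*} [TopologicalSpace M]
    [ChartedSpace (EuclideanSpace ℝ (Fin n)) M] [IsManifold (𝓡 n) (⊤ : ℕ∞) M]
    {g h : ∀ x : M, TangentSpace (𝓡 n) x →ₗ[ℝ] TangentSpace (𝓡 n) x →ₗ[ℝ] ℝ}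
    (hh : ∃ lam : ℝ, 0 ≤ lam ∧ ∀ (x : M) (v : TangentSpace (𝓡 n) x),
      -(lam * g x v v) ≤ h x v v ∧ h x v v ≤ lam * g x v v)
    (x : M) (v : TangentSpace (𝓡 n) x) :
    -(gMeasNorm g h * g x v v) ≤ h x v v ∧ h x v v ≤ gMeasNorm g h * g x v v := by
  unfold gMeasNorm
  refine (IsClosed.csInf_mem ?_ hh ⟨0, fun _ hl => hl.1⟩).2 x v
  show IsClosed {lam : ℝ | _}
  simp only [Set.ofPred_and, Set.ofPred_forall]
  exact isClosed_Ici.inter <| isClosed_iInter fun x => isClosed_iInter fun v =>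
    (isClosed_le (by fun_prop) continuous_const).inter (isClosed_le continuous_const (by fun_prop))

theorem canonical_metric_defined_on_finite_volume_general
    {n : ℕ} {M : Type*} [TopologicalSpace M]
    [ChartedSpace (EuclideanSpace ℝ (Fin n)) M] [IsManifold (𝓡 n) (⊤ : ℕ∞) M]
    [MeasurableSpace M] [BorelSpace M]
    (ν : Measure M) [IsFiniteMeasure ν]
    (g h k : ∀ x : M, TangentSpace (𝓡 n) x →ₗ[ℝ] TangentSpace (𝓡 n) x →ₗ[ℝ] ℝ)
    -- `g` is a (continuous) Riemannian metric:
    (hg_symm : ∀ (x : M) (u v : TangentSpace (𝓡 n) x), g x u v = g x v u)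
    (hg_pos : ∀ (x : M) (v : TangentSpace (𝓡 n) x), v ≠ 0 → 0 < g x v v)
    (hg_cont : Continuous fun p : TotalSpace (EuclideanSpace ℝ (Fin n))
      (TangentSpace (𝓡 n) : M → Type _) => g p.proj p.2 p.2)
    -- `h, k` are continuous symmetric 2-covariant tensor fields:
    (hh_symm : ∀ (x : M) (u v : TangentSpace (𝓡 n) x), h x u v = h x v u)
    (hk_symm : ∀ (x : M) (u v : TangentSpace (𝓡 n) x), k x u v = k x v u)
    (hh_cont : Continuous fun p : TotalSpace (EuclideanSpace ℝ (Fin n))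
      (TangentSpace (𝓡 n) : M → Type _) => h p.proj p.2 p.2)
    (hk_cont : Continuous fun p : TotalSpace (EuclideanSpace ℝ (Fin n))
      (TangentSpace (𝓡 n) : M → Type _) => k p.proj p.2 p.2)
    -- `h, k` are `g`-measurable:
    (hh_meas : ∃ lam : ℝ, 0 ≤ lam ∧ ∀ (x : M) (v : TangentSpace (𝓡 n) x),
      -(lam * g x v v) ≤ h x v v ∧ h x v v ≤ lam * g x v v)
    (hk_meas : ∃ mu : ℝ, 0 ≤ mu ∧ ∀ (x : M) (v : TangentSpace (𝓡 n) x),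
      -(mu * g x v v) ≤ k x v v ∧ k x v v ≤ mu * g x v v)
    -- `H, K` are the `g`-self-adjoint endomorphism fields with
    -- `h u v = g (H u) v` and `k u v = g (K u) v` (i.e. `H = g⁻¹h`, `K = g⁻¹k`):
    (H K : ∀ x : M, TangentSpace (𝓡 n) x →ₗ[ℝ] TangentSpace (𝓡 n) x)
    (hH : ∀ (x : M) (u v : TangentSpace (𝓡 n) x), g x (H x u) v = h x u v)
    (hK : ∀ (x : M) (u v : TangentSpace (𝓡 n) x), g x (K x u) v = k x u v) :
    Integrable (fun x : M => LinearMap.trace ℝ (TangentSpace (𝓡 n) x) (H x ∘ₗ K x)) ν ∧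
    -((n : ℝ) * gMeasNorm g h * gMeasNorm g k * (ν univ).toReal) ≤
      ∫ x : M, LinearMap.trace ℝ (TangentSpace (𝓡 n) x) (H x ∘ₗ K x) ∂ν ∧
    ∫ x : M, LinearMap.trace ℝ (TangentSpace (𝓡 n) x) (H x ∘ₗ K x) ∂ν ≤
      (n : ℝ) * gMeasNorm g h * gMeasNorm g k * (ν univ).toReal := by
  have hbound : ∀ x : M, ‖LinearMap.trace ℝ (TangentSpace (𝓡 n) x) (H x ∘ₗ K x)‖ ≤
      n * gMeasNorm g h * gMeasNorm g k := fun x => by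
    have : FiniteDimensional ℝ (TangentSpace (𝓡 n) x) :=
      inferInstanceAs (FiniteDimensional ℝ (EuclideanSpace ℝ (Fin n)))
    have hdim : Module.finrank ℝ (TangentSpace (𝓡 n) x) = n := finrank_euclideanSpace_fin
    simpa [hdim] using LinearMap.abs_trace_comp_le_of_posDef (hg_symm x) (hg_pos x)
      (hh_symm x) (gMeasNorm_spec hh_meas x) (gMeasNorm_spec hk_meas x) (hH x) (hK x)
  have hcont := continuous_trace_comp hg_symm hg_pos hg_cont hh_symm hk_symm hh_cont hk_cont hH hK
  have hintegral := abs_le.1 (norm_integral_le_of_norm_le_const (μ := ν) (.of_forall hbound))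
  exact ⟨.of_bound hcont.aestronglyMeasurable _ (.of_forall hbound), hintegral.1, hintegral.2⟩

/-- Let `(M, g)` be an `n`-dimensional Riemannian manifold of finite
volume, with Riemannian volume measure `ν = ν_g` satisfying `Vol(M, g) = ν(M) < ∞`
(Mathlib has no canonical Riemannian volume measure, so `ν` is taken to be a finite
Borel measure playing the role of `ν_g`).  Let `h, k` be continuous symmetric
2-covariant tensor fields on `M` that are `g`-measurable (`∃ λ ≥ 0, -λg ≤ h ≤ λg`
pointwise, and similarly for `k`), and let `H, K` be the fields of `g`-self-adjoint
endomorphisms of the tangent spaces representing `h, k`.  Then the pointwise inner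
product `x ↦ trace(g⁻¹ h g⁻¹ k)(x) = trace (H x ∘ K x) = Σᵢ h_x((k_x Eᵢ)^♯, Eᵢ)` is
`ν`-integrable and the canonical metric pairing `G_g(h,k) = ∫_M trace(g⁻¹hg⁻¹k) dν`
satisfies `-n
|h|⁰_g |k|⁰_g Vol(M,g) ≤ G_g(h,k) ≤ n |h|⁰_g |k|⁰_g Vol(M,g)`;
in particular the canonical Riemannian metric on the space of Riemannian metrics is
defined on the space `Γ_g` of `g`-measurable tensor fields when `g` has finite
volume. -/
theorem canonical_metric_defined_on_finite_volume
    {n : ℕ} {M : Type*} [TopologicalSpace M]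
    [ChartedSpace (EuclideanSpace ℝ (Fin n)) M] [IsManifold (𝓡 n) (⊤ : ℕ∞) M]
    [T2Space M] [MeasurableSpace M] [BorelSpace M]
    (ν : Measure M) [IsFiniteMeasure ν]
    (g h k : ∀ x : M, TangentSpace (𝓡 n) x →ₗ[ℝ] TangentSpace (𝓡 n) x →ₗ[ℝ] ℝ)
    -- `g` is a (continuous) Riemannian metric:
    (hg_symm : ∀ (x : M) (u v : TangentSpace (𝓡 n) x), g x u v = g x v u)
    (hg_pos : ∀ (x : M) (v : TangentSpace (𝓡 n) x), v ≠ 0 → 0 < g x v v)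
    (hg_cont : Continuous fun p : TotalSpace (EuclideanSpace ℝ (Fin n))
      (TangentSpace (𝓡 n) : M → Type _) => g p.proj p.2 p.2)
    -- `h, k` are continuous symmetric 2-covariant tensor fields:
    (hh_symm : ∀ (x : M) (u v : TangentSpace (𝓡 n) x), h x u v = h x v u)
    (hk_symm : ∀ (x : M) (u v : TangentSpace (𝓡 n) x), k x u v = k x v u)
    (hh_cont : Continuous fun p : TotalSpace (EuclideanSpace ℝ (Fin n))
      (TangentSpace (𝓡 n) : M → Type _) => h p.proj p.2 p.2)
    (hk_cont : Continuous fun p : TotalSpace (EuclideanSpace ℝ (Fin n))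
      (TangentSpace (𝓡 n) : M → Type _) => k p.proj p.2 p.2)
    -- `h, k` are `g`-measurable:
    (hh_meas : ∃ lam : ℝ, 0 ≤ lam ∧ ∀ (x : M) (v : TangentSpace (𝓡 n) x),
      -(lam * g x v v) ≤ h x v v ∧ h x v v ≤ lam * g x v v)
    (hk_meas : ∃ mu : ℝ, 0 ≤ mu ∧ ∀ (x : M) (v : TangentSpace (𝓡 n) x),
      -(mu * g x v v) ≤ k x v v ∧ k x v v ≤ mu * g x v v)
    -- `H, K` are the `g`-self-adjoint endomorphism fields with
    -- `h u v = g (H u) v` and `k u v = g (K u) v` (i.e. `H = g⁻¹h`, `K = g⁻¹k`):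
    (H K : ∀ x : M, TangentSpace (𝓡 n) x →ₗ[ℝ] TangentSpace (𝓡 n) x)
    (hH : ∀ (x : M) (u v : TangentSpace (𝓡 n) x), g x (H x u) v = h x u v)
    (hK : ∀ (x : M) (u v : TangentSpace (𝓡 n) x), g x (K x u) v = k x u v) :
    Integrable (fun x : M => LinearMap.trace ℝ (TangentSpace (𝓡 n) x) (H x ∘ₗ K x)) ν ∧
    -((n : ℝ) * gMeasNorm g h * gMeasNorm g k * (ν univ).toReal) ≤
      ∫ x : M, LinearMap.trace ℝ (TangentSpace (𝓡 n) x) (H x ∘ₗ K x) ∂ν ∧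
    ∫ x : M, LinearMap.trace ℝ (TangentSpace (𝓡 n) x) (H x ∘ₗ K x) ∂ν ≤
      (n : ℝ) * gMeasNorm g h * gMeasNorm g k * (ν univ).toReal :=
  canonical_metric_defined_on_finite_volume_general ν g h k hg_symm hg_pos hg_cont hh_symm hk_symm
    hh_cont hk_cont hh_meas hk_meas H K hH hK
end
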